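/- Fix a finite set H, probabilities p_h ∈ [0,1], and nonnegative increasing functions f, g, φ : Finset H → ℝ where φ is an arbitrary nonnegative weight. Suppose S, T ⊆ H with T ⊆ S and S ∖ T = {h}. Then (f ⋆ g)(S) - (f ⋆ g)(T) = Σ_{T₁,T₂ ⊆ H∖{h}} p_h(1-p_h)·(f(T₁∪{h}) - f(T₁))·(g(T₂∪{h}) - g(T₂))·μ'_T(T₁,T₂) ≥ 0, where μ'_T is the coupled measure induced on pairs of subsets of H∖{h}. -/
import Mathlib


open Finset

noncomputable section

variable {H : Type*}

/-- P(X,Y) = ∏_{h∈X∩Y} p_h · ∏_{h∈X∖Y} (1-p_h) -/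
def wtP [DecidableEq H] (p : H → ℝ) (X Y : Finset H) : ℝ :=
  (∏ h ∈ X ∩ Y, p h) * ∏ h ∈ X \ Y, (1 - p h)

/-- Coupled coin-tossing measure μ_S on pairs of subsets of H. -/
def muPair [Fintype H] [DecidableEq H] (p : H → ℝ) (S S₁ S₂ : Finset H) : ℝ :=
  if S ∩ S₁ = S ∩ S₂ then
    wtP p S S₁ * wtP p (univ \ S) S₁ * wtP p (univ \ S) S₂
  else 0

/-- Convolution (f ⋆ g)(S) = Σ_{S₁,S₂} f(S₁) g(S₂) μ_S(S₁,S₂). -/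
def starC [Fintype H] [DecidableEq H] (p : H → ℝ) (f g : Finset H → ℝ) (S : Finset H) : ℝ :=
  ∑ S₁ : Finset H, ∑ S₂ : Finset H, f S₁ * g S₂ * muPair p S S₁ S₂

/-- Product Bernoulli measure μ(S) = ∏_{h∈S} p_h ∏_{h∉S} (1-p_h). -/
def muB [Fintype H] [DecidableEq H] (p : H → ℝ) (S : Finset H) : ℝ :=
  (∏ h ∈ S, p h) * ∏ h ∈ Sᶜ, (1 - p h)

/-- Expectation with respect to the product Bernoulli measure. -/
def expB [Fintype H] [DecidableEq H] (p : H → ℝ) (f : Finset H → ℝ) : ℝ :=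
  ∑ S : Finset H, f S * muB p S

/-- Coupled coin-tossing measure on pairs of subsets of a ground set `G`. -/
def muPairOn [DecidableEq H] (p : H → ℝ) (G S S₁ S₂ : Finset H) : ℝ :=
  if S ∩ S₁ = S ∩ S₂ then
    wtP p S S₁ * wtP p (G \ S) S₁ * wtP p (G \ S) S₂
  else 0


section AuxA
variable [DecidableEq H]

lemma wtP_nonneg (p : H → ℝ) (hp : ∀ h, 0 ≤ p h ∧ p h ≤ 1) (X Y : Finset H) :
    0 ≤ wtP p X Y := by
  unfold wtP
  apply mul_nonneg
  · exact Finset.prod_nonneg fun i _ => (hp i).1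
  · exact Finset.prod_nonneg fun i _ => by linarith [(hp i).2]

lemma muPairOn_nonneg (p : H → ℝ) (hp : ∀ h, 0 ≤ p h ∧ p h ≤ 1) (G S S₁ S₂ : Finset H) :
    0 ≤ muPairOn p G S S₁ S₂ := by
  unfold muPairOn
  split
  · exact mul_nonneg (mul_nonneg (wtP_nonneg p hp _ _) (wtP_nonneg p hp _ _)) (wtP_nonneg p hp _ _)
  · exact le_refl 0

lemma wtP_insert_left (p : H → ℝ) {h : H} {T : Finset H} (hhT : h ∉ T) (X : Finset H) :
    wtP p (insert h T) X = (if h ∈ X then p h else (1 - p h)) * wtP p T X := by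
  unfold wtP
  by_cases hx : h ∈ X
  · rw [if_pos hx, insert_inter_of_mem hx, insert_sdiff_of_mem _ hx,
      Finset.prod_insert (fun hc => hhT (mem_inter.mp hc).1)]
    ring
  · rw [if_neg hx, insert_inter_of_notMem hx, insert_sdiff_of_notMem _ hx,
      Finset.prod_insert (fun hc => hhT (mem_sdiff.mp hc).1)]
    ring

lemma wtP_insert_right (p : H → ℝ) {h : H} {T : Finset H} (hhT : h ∉ T) (X : Finset H) :
    wtP p T (insert h X) = wtP p T X := by
  unfold wtP
  rw [inter_insert_of_notMem hhT]
  congr 1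
  congr 1
  ext x
  simp only [mem_sdiff, mem_insert]
  constructor
  · rintro ⟨hx, hne⟩; exact ⟨hx, fun hc => hne (Or.inr hc)⟩
  · rintro ⟨hx, hne⟩
    exact ⟨hx, fun hc => by rcases hc with rfl | hc; exact hhT hx; exact hne hc⟩

lemma insert_inj' {h : H} {A B : Finset H} (hA : h ∉ A) (hB : h ∉ B) :
    insert h A = insert h B ↔ A = B := by
  constructor
  · intro e
    have := congrArg (Finset.erase · h) e
    simpa [Finset.erase_insert hA, Finset.erase_insert hB] using this
  · intro e; rw [e]

end AuxA

section AuxB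
variable [Fintype H] [DecidableEq H]

lemma sum_pair_split (h : H) (F : Finset H → ℝ) :
    ∑ S₁ : Finset H, F S₁
      = ∑ T₁ ∈ ((univ : Finset H) \ {h}).powerset, (F T₁ + F (insert h T₁)) := by
  have h2 : (univ : Finset H) = insert h (univ \ {h}) := by
    ext x; by_cases hx : x = h <;> simp [hx]
  conv_lhs => rw [← Finset.powerset_univ, h2]
  rw [Finset.sum_powerset_insert (by simp), ← Finset.sum_add_distrib]

lemma univ_sdiff_insert (h : H) (T : Finset H) :
    (univ : Finset H) \ insert h T = (univ \ {h}) \ T := by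
  ext x; simp [not_or, and_assoc]

lemma univ_sdiff_eq {h : H} {T : Finset H} (hhT : h ∉ T) :
    (univ : Finset H) \ T = insert h ((univ \ {h}) \ T) := by
  ext x
  by_cases hx : x = h <;> simp [hx, hhT]

variable {p : H → ℝ} {h : H} {T T₁ T₂ : Finset H}

lemma muPair_eval_S00 (hhT : h ∉ T) (h1 : h ∉ T₁) (h2 : h ∉ T₂) :
    muPair p (insert h T) T₁ T₂ = (1 - p h) * muPairOn p (univ \ {h}) T T₁ T₂ := by
  unfold muPair muPairOn
  rw [insert_inter_of_notMem h1, insert_inter_of_notMem h2, univ_sdiff_insert,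
    wtP_insert_left p hhT T₁, if_neg h1]
  split_ifs <;> ring

lemma muPair_eval_S11 (hhT : h ∉ T) (h1 : h ∉ T₁) (h2 : h ∉ T₂) :
    muPair p (insert h T) (insert h T₁) (insert h T₂)
      = p h * muPairOn p (univ \ {h}) T T₁ T₂ := by
  have hc1 : h ∉ T ∩ T₁ := fun hc => hhT (mem_inter.mp hc).1
  have hc2 : h ∉ T ∩ T₂ := fun hc => hhT (mem_inter.mp hc).1
  unfold muPair muPairOn
  rw [insert_inter_of_mem (mem_insert_self h T₁), insert_inter_of_mem (mem_insert_self h T₂),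
    inter_insert_of_notMem hhT, inter_insert_of_notMem hhT, univ_sdiff_insert,
    wtP_insert_left p hhT (insert h T₁), if_pos (mem_insert_self h T₁),
    wtP_insert_right p hhT T₁,
    wtP_insert_right p (by simp : h ∉ (univ \ {h}) \ T) T₁,
    wtP_insert_right p (by simp : h ∉ (univ \ {h}) \ T) T₂]
  simp only [insert_inj' hc1 hc2]
  split_ifs <;> ring

lemma muPair_eval_S10 (hhT : h ∉ T) (h1 : h ∉ T₁) (h2 : h ∉ T₂) :
    muPair p (insert h T) (insert h T₁) T₂ = 0 := by
  unfold muPair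
  rw [insert_inter_of_mem (mem_insert_self h T₁), insert_inter_of_notMem h2]
  refine if_neg fun e => ?_
  have : h ∈ T ∩ T₂ := e ▸ mem_insert_self h _
  exact hhT (mem_inter.mp this).1

lemma muPair_eval_S01 (hhT : h ∉ T) (h1 : h ∉ T₁) (h2 : h ∉ T₂) :
    muPair p (insert h T) T₁ (insert h T₂) = 0 := by
  unfold muPair
  rw [insert_inter_of_notMem h1, insert_inter_of_mem (mem_insert_self h T₂)]
  refine if_neg fun e => ?_
  have : h ∈ T ∩ T₁ := e ▸ mem_insert_self h _
  exact hhT (mem_inter.mp this).1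

lemma muPair_eval_T00 (hhT : h ∉ T) (h1 : h ∉ T₁) (h2 : h ∉ T₂) :
    muPair p T T₁ T₂ = (1 - p h) * (1 - p h) * muPairOn p (univ \ {h}) T T₁ T₂ := by
  unfold muPair muPairOn
  rw [univ_sdiff_eq hhT, wtP_insert_left p (by simp : h ∉ (univ \ {h}) \ T) T₁,
    wtP_insert_left p (by simp : h ∉ (univ \ {h}) \ T) T₂, if_neg h1, if_neg h2]
  split_ifs <;> ring

lemma muPair_eval_T10 (hhT : h ∉ T) (h1 : h ∉ T₁) (h2 : h ∉ T₂) :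
    muPair p T (insert h T₁) T₂ = p h * (1 - p h) * muPairOn p (univ \ {h}) T T₁ T₂ := by
  unfold muPair muPairOn
  rw [inter_insert_of_notMem hhT, univ_sdiff_eq hhT,
    wtP_insert_right p hhT T₁,
    wtP_insert_left p (by simp : h ∉ (univ \ {h}) \ T) (insert h T₁),
    wtP_insert_left p (by simp : h ∉ (univ \ {h}) \ T) T₂,
    if_pos (mem_insert_self h T₁), if_neg h2,
    wtP_insert_right p (by simp : h ∉ (univ \ {h}) \ T) T₁]
  split_ifs <;> ring

lemma muPair_eval_T01 (hhT : h ∉ T) (h1 : h ∉ T₁) (h2 : h ∉ T₂) :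
    muPair p T T₁ (insert h T₂) = (1 - p h) * p h * muPairOn p (univ \ {h}) T T₁ T₂ := by
  unfold muPair muPairOn
  rw [inter_insert_of_notMem hhT, univ_sdiff_eq hhT,
    wtP_insert_left p (by simp : h ∉ (univ \ {h}) \ T) T₁,
    wtP_insert_left p (by simp : h ∉ (univ \ {h}) \ T) (insert h T₂),
    if_neg h1, if_pos (mem_insert_self h T₂),
    wtP_insert_right p (by simp : h ∉ (univ \ {h}) \ T) T₂]
  split_ifs <;> ring

lemma muPair_eval_T11 (hhT : h ∉ T) (h1 : h ∉ T₁) (h2 : h ∉ T₂) :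
    muPair p T (insert h T₁) (insert h T₂)
      = p h * p h * muPairOn p (univ \ {h}) T T₁ T₂ := by
  unfold muPair muPairOn
  rw [inter_insert_of_notMem hhT, inter_insert_of_notMem hhT, univ_sdiff_eq hhT,
    wtP_insert_right p hhT T₁,
    wtP_insert_left p (by simp : h ∉ (univ \ {h}) \ T) (insert h T₁),
    wtP_insert_left p (by simp : h ∉ (univ \ {h}) \ T) (insert h T₂),
    if_pos (mem_insert_self h T₁), if_pos (mem_insert_self h T₂),
    wtP_insert_right p (by simp : h ∉ (univ \ {h}) \ T) T₁,
    wtP_insert_right p (by simp : h ∉ (univ \ {h}) \ T) T₂]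
  split_ifs <;> ring

end AuxB

theorem starC_difference_identity [Fintype H] [DecidableEq H] (p : H → ℝ)
    (hp : ∀ h, 0 ≤ p h ∧ p h ≤ 1) (f g φ : Finset H → ℝ)
    (hfnn : ∀ S, 0 ≤ f S) (hgnn : ∀ S, 0 ≤ g S) (hφnn : ∀ S, 0 ≤ φ S)
    (hf : ∀ ⦃S T : Finset H⦄, T ⊆ S → f T ≤ f S)
    (hg : ∀ ⦃S T : Finset H⦄, T ⊆ S → g T ≤ g S)
    (hφ : ∀ ⦃S T : Finset H⦄, T ⊆ S → φ T ≤ φ S)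
    (h : H) (S T : Finset H) (hTS : T ⊆ S) (hST : S \ T = {h}) :
    starC p f g S - starC p f g T
      = ∑ T₁ ∈ ((Finset.univ : Finset H) \ {h}).powerset,
          ∑ T₂ ∈ ((Finset.univ : Finset H) \ {h}).powerset,
            p h * (1 - p h) * (f (T₁ ∪ {h}) - f T₁) * (g (T₂ ∪ {h}) - g T₂) *
              muPairOn p (Finset.univ \ {h}) T T₁ T₂ ∧
    0 ≤ starC p f g S - starC p f g T := by
  have hhT : h ∉ T := by
    have hm : h ∈ S \ T := hST ▸ mem_singleton_self h
    exact (mem_sdiff.mp hm).2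
  have hx : ∀ X : Finset H, X ∪ {h} = insert h X := fun X => by ext y; simp [or_comm]
  have hS : S = insert h T := by
    rw [← union_sdiff_of_subset hTS, hST, hx]
  have key : starC p f g S - starC p f g T
      = ∑ T₁ ∈ ((Finset.univ : Finset H) \ {h}).powerset,
          ∑ T₂ ∈ ((Finset.univ : Finset H) \ {h}).powerset,
            p h * (1 - p h) * (f (T₁ ∪ {h}) - f T₁) * (g (T₂ ∪ {h}) - g T₂) *
              muPairOn p (Finset.univ \ {h}) T T₁ T₂ := by
    rw [hS]
    unfold starC
    rw [sum_pair_split h, sum_pair_split h, ← Finset.sum_sub_distrib]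
    refine Finset.sum_congr rfl fun T₁ hT₁ => ?_
    have h1 : h ∉ T₁ := fun hc => by simpa using (mem_powerset.mp hT₁) hc
    rw [sum_pair_split h (fun S₂ => f T₁ * g S₂ * muPair p (insert h T) T₁ S₂),
        sum_pair_split h
          (fun S₂ => f (insert h T₁) * g S₂ * muPair p (insert h T) (insert h T₁) S₂),
        sum_pair_split h (fun S₂ => f T₁ * g S₂ * muPair p T T₁ S₂),
        sum_pair_split h (fun S₂ => f (insert h T₁) * g S₂ * muPair p T (insert h T₁) S₂),
        ← Finset.sum_add_distrib, ← Finset.sum_add_distrib, ← Finset.sum_sub_distrib]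
    refine Finset.sum_congr rfl fun T₂ hT₂ => ?_
    have h2 : h ∉ T₂ := fun hc => by simpa using (mem_powerset.mp hT₂) hc
    rw [muPair_eval_S00 hhT h1 h2, muPair_eval_S01 hhT h1 h2, muPair_eval_S10 hhT h1 h2,
        muPair_eval_S11 hhT h1 h2, muPair_eval_T00 hhT h1 h2, muPair_eval_T01 hhT h1 h2,
        muPair_eval_T10 hhT h1 h2, muPair_eval_T11 hhT h1 h2, hx T₁, hx T₂]
    ring
  refine ⟨key, ?_⟩
  rw [key]
  refine Finset.sum_nonneg fun T₁ _ => Finset.sum_nonneg fun T₂ _ => ?_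
  have hν := muPairOn_nonneg p hp (univ \ {h}) T T₁ T₂
  have hf' : 0 ≤ f (T₁ ∪ {h}) - f T₁ := sub_nonneg.mpr (hf subset_union_left)
  have hg' : 0 ≤ g (T₂ ∪ {h}) - g T₂ := sub_nonneg.mpr (hg subset_union_left)
  have h1p : (0:ℝ) ≤ 1 - p h := by linarith [(hp h).2]
  exact mul_nonneg (mul_nonneg (mul_nonneg (mul_nonneg (hp h).1 h1p) hf') hg') hν
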